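/- Let p be a prime, let k ∈ ℤ_p be nonzero, and assume S = ℤ_p[z]/(z² − k) is the maximal order in K = ℚ_p[z]/(z² − k), i.e., S is identified with the integral closure of ℤ_p in K. Let f and f′ be integer-matrix binary cubic forms with coefficients in ℤ_p, both of reduced discriminant 4k, and suppose f′ = γ·f for some γ ∈ SL₂(ℚ_p). Then f′ = γ′·f for some γ′ ∈ SL₂(ℤ_p). In other words, every SL₂(ℚ_p)-orbit of discriminant 4k contains at most one SL₂(ℤ_p)-orbit of forms with ℤ_p-coefficients. -/

import Mathlib

/-!
By the Cartan decomposition, `γ = A · diag(s⁻¹, s) · B` with `A, B ∈ SL₂(ℤ_p)` and `s ∈ ℤ_p`.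
The integral forms `g = A·f` and `g′ = B⁻¹·f′` then satisfy `g′ = diag(s⁻¹, s)·g`, so
`s ∣ c(g′)` and `s³ ∣ d(g′)`. If `s` is a unit, `γ` itself is integral. Otherwise `g′` has
`c = p·c₀`, `d = p³·d₀` and discriminant `4k`, which forces the element `b·c₀/2 + z/p` of `K`
(trace `b·c₀`, norm in `ℤ_p`) to be integral over `ℤ_p` without lying in `S`, contradicting
the maximality of `S`.
-/

open Matrix MatrixGroups

/-- An (integer-matrix) binary cubic form over `R`: the quadruple `(a,b,c,d)` stands for
`f(x,y) = a·x³ + 3b·x²y + 3c·xy² + d·y³`. -/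
abbrev BCF (R : Type*) := R × R × R × R

def bcfDisc {R : Type*} [CommRing R] (f : BCF R) : R :=
  f.1 ^ 2 * f.2.2.2 ^ 2 - 3 * f.2.1 ^ 2 * f.2.2.1 ^ 2
    - 6 * f.1 * f.2.1 * f.2.2.1 * f.2.2.2 + 4 * f.1 * f.2.2.1 ^ 3 + 4 * f.2.1 ^ 3 * f.2.2.2

def bcfVal {R : Type*} [CommRing R] (f : BCF R) (x y : R) : R :=
  f.1 * x ^ 3 + 3 * f.2.1 * x ^ 2 * y + 3 * f.2.2.1 * x * y ^ 2 + f.2.2.2 * y ^ 3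

/-- The action of a 2×2 matrix `γ = ((p,q),(r,s))` on integer-matrix binary cubic forms
by linear change of variable, `(γ·f)(x,y) = f(px+qy, rx+sy)`, written in coordinates. -/
def bcfAct {R : Type*} [CommRing R] (γ : Matrix (Fin 2) (Fin 2) R) (f : BCF R) : BCF R :=
  (f.1 * γ 0 0 ^ 3 + 3 * f.2.1 * γ 0 0 ^ 2 * γ 1 0 + 3 * f.2.2.1 * γ 0 0 * γ 1 0 ^ 2
     + f.2.2.2 * γ 1 0 ^ 3,
   f.1 * γ 0 0 ^ 2 * γ 0 1 + f.2.1 * (γ 0 0 ^ 2 * γ 1 1 + 2 * γ 0 0 * γ 0 1 * γ 1 0)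
     + f.2.2.1 * (2 * γ 0 0 * γ 1 0 * γ 1 1 + γ 0 1 * γ 1 0 ^ 2) + f.2.2.2 * γ 1 0 ^ 2 * γ 1 1,
   f.1 * γ 0 0 * γ 0 1 ^ 2 + f.2.1 * (2 * γ 0 0 * γ 0 1 * γ 1 1 + γ 0 1 ^ 2 * γ 1 0)
     + f.2.2.1 * (γ 0 0 * γ 1 1 ^ 2 + 2 * γ 0 1 * γ 1 0 * γ 1 1) + f.2.2.2 * γ 1 0 * γ 1 1 ^ 2,
   f.1 * γ 0 1 ^ 3 + 3 * f.2.1 * γ 0 1 ^ 2 * γ 1 1 + 3 * f.2.2.1 * γ 0 1 * γ 1 1 ^ 2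
     + f.2.2.2 * γ 1 1 ^ 3)

theorem bcfAct_val {R : Type*} [CommRing R] (γ : Matrix (Fin 2) (Fin 2) R) (f : BCF R)
    (x y : R) : bcfVal (bcfAct γ f) x y
      = bcfVal f (γ 0 0 * x + γ 0 1 * y) (γ 1 0 * x + γ 1 1 * y) := by
  simp only [bcfAct, bcfVal]; ring

theorem bcfAct_one {R : Type*} [CommRing R] (f : BCF R) : bcfAct (1 : Matrix (Fin 2) (Fin 2) R) f = f := by
  obtain ⟨a, b, c, d⟩ := f
  simp [bcfAct]

theorem bcfAct_mul {R : Type*} [CommRing R] (g h : Matrix (Fin 2) (Fin 2) R) (f : BCF R) :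
    bcfAct (g * h) f = bcfAct h (bcfAct g f) := by
  obtain ⟨a, b, c, d⟩ := f
  simp only [bcfAct, Matrix.mul_apply, Fin.sum_univ_two, Prod.mk.injEq]
  refine ⟨by ring, by ring, by ring, by ring⟩

noncomputable section

open Polynomial

variable (p : ℕ) [Fact p.Prime] (k : ℤ_[p])

/-- The order `S = ℤ_p[z]/(z² − k)`. -/
abbrev Sord := AdjoinRoot (Polynomial.X ^ 2 - Polynomial.C k : Polynomial ℤ_[p])

/-- The quadratic étale algebra `K = ℚ_p[z]/(z² − k)`. -/
abbrev Kalg := AdjoinRoot (Polynomial.X ^ 2 - Polynomial.C (k : ℚ_[p]) : Polynomial ℚ_[p])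

/-- The natural map `S → K`. -/
def iota : Sord p k →+* Kalg p k :=
  AdjoinRoot.lift (algebraMap ℤ_[p] (Kalg p k)) (AdjoinRoot.root _) (by
    have h := AdjoinRoot.eval₂_root (X ^ 2 - C (k : ℚ_[p]) : Polynomial ℚ_[p])
    simp only [eval₂_sub, eval₂_pow, eval₂_X, eval₂_C] at h ⊢
    rw [IsScalarTower.algebraMap_apply ℤ_[p] ℚ_[p], AdjoinRoot.algebraMap_eq]
    exact h)

def mapC : BCF ℤ_[p] → BCF ℚ_[p] := fun f =>
  ((f.1 : ℚ_[p]), (f.2.1 : ℚ_[p]), (f.2.2.1 : ℚ_[p]), (f.2.2.2 : ℚ_[p]))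

local notation "M₂(" R ")" => Matrix (Fin 2) (Fin 2) R

local notation "ι" => PadicInt.Coe.ringHom

theorem bcfDisc_bcfAct {R : Type*} [CommRing R] (γ : Matrix (Fin 2) (Fin 2) R) (f : BCF R) :
    bcfDisc (bcfAct γ f) = γ.det ^ 6 * bcfDisc f := by
  obtain ⟨a, b, c, d⟩ := f
  simp only [bcfAct, bcfDisc, det_fin_two]
  ring

theorem bcfAct_diag {R : Type*} [CommRing R] (u v : R) (f : BCF R) :
    bcfAct !![u, 0; 0, v] f
      = (f.1 * u ^ 3, f.2.1 * u ^ 2 * v, f.2.2.1 * u * v ^ 2, f.2.2.2 * v ^ 3) := by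
  obtain ⟨a, b, c, d⟩ := f
  simp only [bcfAct, of_apply, cons_val', cons_val_zero, cons_val_one, empty_val',
    cons_val_fin_one, Prod.mk.injEq]
  refine ⟨by ring, by ring, by ring, by ring⟩

theorem mapC_bcfAct (A : SL(2, ℤ_[p])) (f : BCF ℤ_[p]) :
    mapC p (bcfAct (A : M₂(ℤ_[p])) f)
      = bcfAct (SpecialLinearGroup.map ι A : M₂(ℚ_[p])) (mapC p f) := by
  obtain ⟨a, b, c, d⟩ := f
  simp only [mapC, bcfAct, Matrix.SpecialLinearGroup.map_apply_coe, RingHom.mapMatrix_apply,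
    map_apply]
  push_cast
  rfl

theorem mapC_injective : Function.Injective (mapC p) := by
  rintro ⟨a, b, c, d⟩ ⟨a', b', c', d'⟩ h
  simp only [mapC, Prod.mk.injEq] at h
  obtain ⟨h₁, h₂, h₃, h₄⟩ := h
  rw [PadicInt.ext h₁, PadicInt.ext h₂, PadicInt.ext h₃, PadicInt.ext h₄]

theorem dvd_of_mapC_eq_bcfAct_diag {g g' : BCF ℤ_[p]} {s : ℤ_[p]} (hs : s ≠ 0)
    (h : mapC p g' = bcfAct !![(s : ℚ_[p])⁻¹, 0; 0, (s : ℚ_[p])] (mapC p g)) :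
    s ∣ g'.2.2.1 ∧ s ^ 3 ∣ g'.2.2.2 := by
  have hs' : (s : ℚ_[p]) ≠ 0 := PadicInt.coe_ne_zero.mpr hs
  simp only [bcfAct_diag, mapC, Prod.mk.injEq] at h
  refine ⟨⟨g.2.2.1, PadicInt.ext ?_⟩, ⟨g.2.2.2, PadicInt.ext ?_⟩⟩
  · rw [h.2.2.1]; push_cast; field_simp
  · rw [h.2.2.2]; push_cast; ring

namespace AdjoinRoot

theorem root_sq_eq {R : Type*} [CommRing R] (a : R) :
    root (X ^ 2 - C a) ^ 2 = algebraMap R _ a := by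
  rw [← mk_X, ← map_pow, algebraMap_eq, ← mk_C, mk_eq_mk]

theorem exists_eq_algebraMap_add_mul_root {R : Type*} [CommRing R] [Nontrivial R] (a : R)
    (s : AdjoinRoot (X ^ 2 - C a)) :
    ∃ x y : R, s = algebraMap R _ x + algebraMap R _ y * root _ := by
  have hmon : (X ^ 2 - C a).Monic := by monicity!
  obtain ⟨q, rfl⟩ := mk_surjective s
  have hdeg : (q %ₘ (X ^ 2 - C a)).degree ≤ 1 := by
    have := degree_modByMonic_lt q hmon
    rw [degree_X_pow_sub_C two_pos] at this
    exact Order.le_of_lt_succ this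
  refine ⟨(q %ₘ (X ^ 2 - C a)).coeff 0, (q %ₘ (X ^ 2 - C a)).coeff 1, ?_⟩
  conv_lhs => rw [← mk_leftInverse hmon (mk _ q), modByMonicHom_mk,
    eq_X_add_C_of_degree_le_one hdeg]
  simp only [map_add, map_mul, mk_C, mk_X, algebraMap_eq]
  ring

theorem eq_of_algebraMap_add_mul_root_eq {R : Type*} [CommRing R] [Nontrivial R]
    {a x y x' y' : R}
    (h : algebraMap R (AdjoinRoot (X ^ 2 - C a)) x + algebraMap R _ y * root _
      = algebraMap R _ x' + algebraMap R _ y' * root _) : y = y' := by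
  have hmon : (X ^ 2 - C a).Monic := by monicity!
  have hdvd : X ^ 2 - C a ∣ C (y - y') * X + C (x - x') := by
    rw [← mk_eq_zero]
    simp only [map_add, map_mul, map_sub, mk_C, mk_X]
    rw [← algebraMap_eq]
    linear_combination h
  have hzero : C (y - y') * X + C (x - x') = 0 := by
    by_contra hne
    refine hmon.not_dvd_of_degree_lt hne ?_ hdvd
    rw [degree_X_pow_sub_C two_pos]
    exact degree_linear_le.trans_lt (by decide)
  simpa [sub_eq_zero] using congrArg (coeff · 1) hzero

theorem isIntegral_algebraMap_add_mul_root {R F : Type*} [CommRing R] [CommRing F]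
    [Algebra R F] {a x y : F} {t n : R} (ht : 2 * x = algebraMap R F t)
    (hn : x ^ 2 - y ^ 2 * a = algebraMap R F n) :
    IsIntegral R (algebraMap F (AdjoinRoot (X ^ 2 - C a)) x
      + algebraMap F (AdjoinRoot (X ^ 2 - C a)) y * root _) := by
  refine ⟨X ^ 2 - C t * X + C n, by monicity!, ?_⟩
  simp only [eval₂_add, eval₂_sub, eval₂_mul, eval₂_pow, eval₂_X, eval₂_C,
    IsScalarTower.algebraMap_apply R F (AdjoinRoot (X ^ 2 - C a)), ← ht, ← hn, map_mul, map_sub,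
    map_pow, map_ofNat]
  linear_combination (algebraMap F (AdjoinRoot (X ^ 2 - C a)) y ^ 2) * root_sq_eq a

end AdjoinRoot

theorem two_dvd_prime_sq : (2 : ℤ_[p]) ∣ (p : ℤ_[p]) ^ 2 := by
  obtain rfl | hp2 := eq_or_ne p 2
  · exact dvd_pow_self _ two_ne_zero
  · refine IsUnit.dvd (PadicInt.isUnit_iff.mpr ?_)
    rw [← Nat.cast_ofNat, PadicInt.norm_natCast_eq_one_iff]
    exact (Nat.coprime_primes Fact.out Nat.prime_two).mpr hp2

section Maximal

variable {p k}

theorem iota_algebraMap (r : ℤ_[p]) :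
    iota p k (algebraMap ℤ_[p] _ r) = algebraMap ℚ_[p] (Kalg p k) r := by
  rw [iota, AdjoinRoot.algebraMap_eq, AdjoinRoot.lift_of,
    IsScalarTower.algebraMap_apply ℤ_[p] ℚ_[p]]
  rfl

theorem iota_root : iota p k (AdjoinRoot.root _) = AdjoinRoot.root _ := AdjoinRoot.lift_root _

theorem norm_le_one_of_isIntegral
    (hmax : (iota p k).range = (integralClosure ℤ_[p] (Kalg p k)).toSubring) {x y : ℚ_[p]}
    (hw : IsIntegral ℤ_[p]
      (algebraMap ℚ_[p] (Kalg p k) x + algebraMap ℚ_[p] (Kalg p k) y * AdjoinRoot.root _)) :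
    ‖y‖ ≤ 1 := by
  obtain ⟨s, hs⟩ : _ ∈ (iota p k).range := by rw [hmax]; exact hw
  obtain ⟨r₀, r₁, rfl⟩ := AdjoinRoot.exists_eq_algebraMap_add_mul_root k s
  rw [map_add, map_mul, iota_algebraMap, iota_algebraMap, iota_root] at hs
  rw [← AdjoinRoot.eq_of_algebraMap_add_mul_root_eq hs]
  exact r₁.norm_le_one

theorem not_prime_pow_three_dvd_of_bcfDisc_eq
    (hmax : (iota p k).range = (integralClosure ℤ_[p] (Kalg p k)).toSubring)
    (g : BCF ℤ_[p]) (hg : bcfDisc g = 4 * k) (hc : (p : ℤ_[p]) ∣ g.2.2.1) :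
    ¬ (p : ℤ_[p]) ^ 3 ∣ g.2.2.2 := by
  obtain ⟨a, b, c, d⟩ := g
  obtain ⟨c, rfl⟩ := hc
  rintro ⟨d, rfl⟩
  obtain ⟨h, hh⟩ := two_dvd_prime_sq p
  -- `n` is the norm `(b·c/2)² - k/p²` of `b·c/2 + z/p`, written integrally using `2h = p²`.
  set n := b ^ 2 * c ^ 2 - h ^ 2 * a ^ 2 * d ^ 2 + 3 * h * a * b * c * d - p * a * c ^ 3
    - p * b ^ 3 * d
  have key : 4 * k = p ^ 2 * (b ^ 2 * c ^ 2 - 4 * n) := by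
    rw [← hg, bcfDisc]
    linear_combination (a ^ 2 * d ^ 2 * p ^ 2 * (2 * h + p ^ 2) - 6 * a * b * c * d * p ^ 2) * hh
  have hP : (p : ℚ_[p]) ≠ 0 := Nat.cast_ne_zero.mpr (Fact.out : p.Prime).ne_zero
  have hn : ((b : ℚ_[p]) * c / 2) ^ 2 - (p : ℚ_[p])⁻¹ ^ 2 * k = algebraMap ℤ_[p] ℚ_[p] n := by
    have := congrArg (algebraMap ℤ_[p] ℚ_[p]) key
    simp only [map_mul, map_sub, map_pow, map_ofNat, map_natCast, PadicInt.algebraMap_apply]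
      at this
    rw [PadicInt.algebraMap_apply]
    field_simp
    linear_combination -this
  have hy := norm_le_one_of_isIntegral hmax (AdjoinRoot.isIntegral_algebraMap_add_mul_root
    (t := b * c) (by rw [map_mul, PadicInt.algebraMap_apply, PadicInt.algebraMap_apply,
      mul_div_cancel₀ _ two_ne_zero]) hn)
  rw [norm_inv, Padic.norm_p, inv_inv] at hy
  exact hy.not_gt (by exact_mod_cast (Fact.out : p.Prime).one_lt)

end Maximal

section Cartan

variable {p}

def weyl {R : Type*} [CommRing R] : SL(2, R) := ⟨!![0, -1; 1, 0], by simp [det_fin_two_of]⟩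

def unitDiag {R : Type*} [CommRing R] (u : Rˣ) : SL(2, R) :=
  ⟨!![(u⁻¹ : Rˣ), 0; 0, (u : R)], by simp [det_fin_two_of]⟩

def IsCartanProduct (M : M₂(ℚ_[p])) : Prop :=
  ∃ (A B : SL(2, ℤ_[p])) (s : ℤ_[p]), s ≠ 0 ∧
    M = (SpecialLinearGroup.map ι A : M₂(ℚ_[p]))
      * !![(s : ℚ_[p])⁻¹, 0; 0, (s : ℚ_[p])]
      * (SpecialLinearGroup.map ι B : M₂(ℚ_[p]))

theorem coe_map_weyl :
    (SpecialLinearGroup.map ι (weyl : SL(2, ℤ_[p])) : M₂(ℚ_[p])) = !![0, -1; 1, 0] := by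
  ext i j; fin_cases i <;> fin_cases j <;> rfl

theorem coe_map_unitDiag (u : ℤ_[p]ˣ) :
    (SpecialLinearGroup.map ι (unitDiag u) : M₂(ℚ_[p]))
      = !![((u : ℤ_[p]) : ℚ_[p])⁻¹, 0; 0, ((u : ℤ_[p]) : ℚ_[p])] := by
  ext i j; fin_cases i <;> fin_cases j
  exacts [map_units_inv ι u, rfl, rfl, rfl]

theorem det_coe_map_mul_mul (P Q : SL(2, ℤ_[p])) (M : M₂(ℚ_[p])) :
    ((SpecialLinearGroup.map ι P : M₂(ℚ_[p])) * M * (SpecialLinearGroup.map ι Q : M₂(ℚ_[p]))).det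
      = M.det := by
  rw [det_mul, det_mul, Matrix.SpecialLinearGroup.det_coe, Matrix.SpecialLinearGroup.det_coe,
    one_mul, mul_one]

theorem one_le_norm_of_det_eq_one {M : M₂(ℚ_[p])} (hM : M.det = 1)
    (h : ∀ i j, ‖M i j‖ ≤ ‖M 0 0‖) : 1 ≤ ‖M 0 0‖ := by
  rw [det_fin_two] at hM
  have hle : 1 ≤ max (‖M 0 0‖ * ‖M 1 1‖) (‖M 0 1‖ * ‖M 1 0‖) := by
    calc (1 : ℝ) = ‖M 0 0 * M 1 1 + -(M 0 1 * M 1 0)‖ := by rw [← sub_eq_add_neg, hM, norm_one]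
      _ ≤ _ := IsUltrametricDist.norm_add_le_max _ _
      _ = _ := by rw [norm_neg, norm_mul, norm_mul]
  have h00 := norm_nonneg (M 0 0)
  have hsq : 1 ≤ ‖M 0 0‖ ^ 2 := by
    refine hle.trans (max_le ?_ ?_) <;> rw [sq] <;> gcongr <;> exact h _ _
  nlinarith

theorem isCartanProduct_of_norm_le {M : M₂(ℚ_[p])} (hM : M.det = 1)
    (h : ∀ i j, ‖M i j‖ ≤ ‖M 0 0‖) : IsCartanProduct M := by
  have h1 := one_le_norm_of_det_eq_one hM h
  have hpos : 0 < ‖M 0 0‖ := one_pos.trans_le h1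
  have h0 : M 0 0 ≠ 0 := norm_pos_iff.mp hpos
  let s : ℤ_[p] := ⟨(M 0 0)⁻¹, by rw [norm_inv]; exact inv_le_one_of_one_le₀ h1⟩
  let l : ℤ_[p] := ⟨M 1 0 / M 0 0, by rw [norm_div]; exact div_le_one_of_le₀ (h 1 0) hpos.le⟩
  let r : ℤ_[p] := ⟨M 0 1 / M 0 0, by rw [norm_div]; exact div_le_one_of_le₀ (h 0 1) hpos.le⟩
  let L : SL(2, ℤ_[p]) := ⟨!![1, 0; l, 1], by simp [det_fin_two_of]⟩
  let U : SL(2, ℤ_[p]) := ⟨!![1, r; 0, 1], by simp [det_fin_two_of]⟩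
  have hL : (SpecialLinearGroup.map ι L : M₂(ℚ_[p])) = !![1, 0; M 1 0 / M 0 0, 1] := by
    ext i j; fin_cases i <;> fin_cases j <;> rfl
  have hU : (SpecialLinearGroup.map ι U : M₂(ℚ_[p])) = !![1, M 0 1 / M 0 0; 0, 1] := by
    ext i j; fin_cases i <;> fin_cases j <;> rfl
  refine ⟨L, U, s, fun hs ↦ inv_ne_zero h0 (congrArg Subtype.val hs), ?_⟩
  rw [hL, hU, show (s : ℚ_[p]) = (M 0 0)⁻¹ from rfl, inv_inv, mul_fin_two, mul_fin_two]
  rw [det_fin_two] at hM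
  ext i j
  fin_cases i <;> fin_cases j <;> simp <;> field_simp
  linear_combination hM

theorem IsCartanProduct.of_mul {M : M₂(ℚ_[p])} (P Q : SL(2, ℤ_[p]))
    (h : IsCartanProduct
      ((SpecialLinearGroup.map ι P : M₂(ℚ_[p])) * M * (SpecialLinearGroup.map ι Q : M₂(ℚ_[p])))) :
    IsCartanProduct M := by
  obtain ⟨A, B, s, hs, hM⟩ := h
  refine ⟨P⁻¹ * A, B * Q⁻¹, s, hs, ?_⟩
  set φ := SpecialLinearGroup.map (n := Fin 2) (ι : ℤ_[p] →+* ℚ_[p])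
  calc M = ((φ P⁻¹ * φ P : SL(2, ℚ_[p])) : M₂(ℚ_[p])) * M * (φ Q * φ Q⁻¹ : SL(2, ℚ_[p])) := by
        simp
    _ = (φ P⁻¹ : M₂(ℚ_[p])) * ((φ P : M₂(ℚ_[p])) * M * φ Q) * (φ Q⁻¹ : M₂(ℚ_[p])) := by
        simp only [Matrix.SpecialLinearGroup.coe_mul, mul_assoc]
    _ = _ := by
        rw [hM]
        simp only [Matrix.SpecialLinearGroup.coe_mul, map_mul, mul_assoc]

theorem isCartanProduct_of_norm_le_col_zero {M : M₂(ℚ_[p])} (hM : M.det = 1) :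
    ∀ i : Fin 2, (∀ a b, ‖M a b‖ ≤ ‖M i 0‖) → IsCartanProduct M
  | 0, h => isCartanProduct_of_norm_le hM h
  | 1, h => by
    refine IsCartanProduct.of_mul weyl 1 (isCartanProduct_of_norm_le ?_ fun a b ↦ ?_)
    · exact (det_coe_map_mul_mul _ _ M).trans hM
    · rw [coe_map_weyl, map_one, Matrix.SpecialLinearGroup.coe_one, mul_one, eta_fin_two M,
        mul_fin_two]
      fin_cases a <;> fin_cases b <;> simp [h]

theorem isCartanProduct_of_det_eq_one {M : M₂(ℚ_[p])} (hM : M.det = 1) : IsCartanProduct M := by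
  obtain ⟨⟨i, j⟩, h⟩ := Finite.exists_max fun ij : Fin 2 × Fin 2 ↦ ‖M ij.1 ij.2‖
  replace h : ∀ a b, ‖M a b‖ ≤ ‖M i j‖ := fun a b ↦ h (a, b)
  match j, h with
  | 0, h => exact isCartanProduct_of_norm_le_col_zero hM i h
  | 1, h =>
    refine IsCartanProduct.of_mul 1 weyl (isCartanProduct_of_norm_le_col_zero ?_ i fun a b ↦ ?_)
    · exact (det_coe_map_mul_mul _ _ M).trans hM
    · rw [coe_map_weyl, map_one, Matrix.SpecialLinearGroup.coe_one, one_mul, eta_fin_two M,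
        mul_fin_two]
      fin_cases i <;> fin_cases a <;> fin_cases b <;> simp_all

end Cartan

theorem rational_equiv_implies_integral_equiv
    (hmax : (iota p k).range = (integralClosure ℤ_[p] (Kalg p k)).toSubring)
    (f f' : BCF ℤ_[p]) (hf' : bcfDisc f' = 4 * k)
    (γ : Matrix.SpecialLinearGroup (Fin 2) ℚ_[p])
    (hγ : bcfAct (γ : Matrix (Fin 2) (Fin 2) ℚ_[p]) (mapC p f) = mapC p f') :
    ∃ γ' : Matrix.SpecialLinearGroup (Fin 2) ℤ_[p],
      bcfAct (γ' : Matrix (Fin 2) (Fin 2) ℤ_[p]) f = f' := by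
  obtain ⟨A, B, s, hs, hγAB⟩ := isCartanProduct_of_det_eq_one γ.2
  have hdiag : mapC p (bcfAct (B⁻¹ : SL(2, ℤ_[p])) f')
      = bcfAct !![(s : ℚ_[p])⁻¹, 0; 0, (s : ℚ_[p])] (mapC p (bcfAct (A : M₂(ℤ_[p])) f)) := by
    rw [mapC_bcfAct, mapC_bcfAct, ← hγ, hγAB, bcfAct_mul, bcfAct_mul,
      ← bcfAct_mul _ _ (bcfAct _ _),
      ← Matrix.SpecialLinearGroup.coe_mul, ← map_mul, mul_inv_cancel, map_one,
      Matrix.SpecialLinearGroup.coe_one, bcfAct_one]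
  by_cases hu : IsUnit s
  · obtain ⟨u, rfl⟩ := hu
    refine ⟨A * unitDiag u * B, mapC_injective p ?_⟩
    rw [mapC_bcfAct, ← hγ, hγAB, map_mul, map_mul, Matrix.SpecialLinearGroup.coe_mul,
      Matrix.SpecialLinearGroup.coe_mul, coe_map_unitDiag]
  · have hps : (p : ℤ_[p]) ∣ s :=
      (PadicInt.norm_lt_one_iff_dvd s).mp (PadicInt.not_isUnit_iff.mp hu)
    obtain ⟨hc, hd⟩ := dvd_of_mapC_eq_bcfAct_diag p hs hdiag
    refine absurd ((pow_dvd_pow_of_dvd hps 3).trans hd)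
      (not_prime_pow_three_dvd_of_bcfDisc_eq hmax _ ?_ (hps.trans hc))
    rw [bcfDisc_bcfAct, Matrix.SpecialLinearGroup.det_coe, one_pow, one_mul, hf']

end
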